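/- Fix h ∈ ℝ and J > 0. For every m ∈ ℝ, the second derivative of the variational pressure satisfies ∂² p̃(m) + 2J = (2J)²·g'(2Jm + h − J), and this quantity is strictly positive. Consequently, at any point m with λ := ∂² p̃(m) < 0 one has −λ^{−1} − (2J)^{−1} > 0. -/

import Mathlib

open MeasureTheory Filter Real

noncomputable section

/-- `g(h) = (e^h/2)(√(e^{2h}+4) − e^h)`. -/
def gFun (h : ℝ) : ℝ := Real.exp h / 2 * (Real.sqrt (Real.exp (2*h) + 4) - Real.exp h)

/-- `p⁰(h) = −(1−g(h))/2 − (1/2)·log(1−g(h))`. -/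
def p0 (h : ℝ) : ℝ := -(1 - gFun h)/2 - (1/2) * Real.log (1 - gFun h)

/-- Variational pressure `p̃(m) = −Jm² + p⁰((2m−1)J + h)`. -/
def ptilde (h J m : ℝ) : ℝ := -J * m^2 + p0 ((2*m - 1) * J + h)

/-! With `E = e^h` and `s = √(E² + 4)` one has `g = E(s − E)/2`, `1 − g = (s − E)²/4` and
`g' = E(s − E)²/(2s) > 0`. These give the differential equation `g'(2 − g) = 2g(1 − g)`, which is
exactly what makes `p⁰' = g`. Hence `p̃'(m) = −2Jm + 2J·g(2Jm + h − J)` and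
`p̃'' + 2J = (2J)²·g'(2Jm + h − J) > 0`; if `λ = p̃'' < 0` then `0 < −λ < 2J`, so `−λ⁻¹ > (2J)⁻¹`. -/

lemma neg_inv_sub_inv_pos {a b : ℝ} (ha : a < 0) (hab : 0 < a + b) : 0 < -a⁻¹ - b⁻¹ := by
  have hlt : b⁻¹ < (-a)⁻¹ := inv_strictAnti₀ (by linarith) (by linarith)
  rw [inv_neg] at hlt
  linarith

lemma exp_two_mul_eq_sq (h : ℝ) : exp (2*h) = exp h ^ 2 := by
  rw [two_mul, exp_add, sq]

lemma sq_sqrt_exp_two_mul_add_four (h : ℝ) : √(exp (2*h) + 4) ^ 2 = exp h ^ 2 + 4 := by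
  rw [sq_sqrt (by positivity), exp_two_mul_eq_sq]

lemma sqrt_exp_two_mul_add_four_sub_exp_pos (h : ℝ) : 0 < √(exp (2*h) + 4) - exp h := by
  rw [sub_pos, exp_two_mul_eq_sq]
  exact lt_sqrt_of_sq_lt (by linarith)

def gFunDeriv (h : ℝ) : ℝ := exp h * (√(exp (2*h) + 4) - exp h)^2 / (2 * √(exp (2*h) + 4))

lemma gFunDeriv_pos (h : ℝ) : 0 < gFunDeriv h := by
  have := sqrt_exp_two_mul_add_four_sub_exp_pos h
  unfold gFunDeriv
  positivity

lemma hasDerivAt_gFun (h : ℝ) : HasDerivAt gFun (gFunDeriv h) h := by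
  have hinner : HasDerivAt (fun x : ℝ => exp (2*x) + 4) (exp (2*h) * 2) h := by
    simpa using (((hasDerivAt_id h).const_mul (2:ℝ)).exp).add_const (4:ℝ)
  have hexp := hasDerivAt_exp h
  refine ((hexp.div_const 2).mul ((hinner.sqrt (by positivity)).sub hexp)).congr_deriv ?_
  have hs : √(exp (2*h) + 4) ≠ 0 := by positivity
  simp only [Pi.sub_apply, gFunDeriv, exp_two_mul_eq_sq h]
  field_simp
  ring

lemma deriv_gFun : deriv gFun = gFunDeriv := funext fun h => (hasDerivAt_gFun h).deriv

lemma one_sub_gFun (h : ℝ) : 1 - gFun h = (√(exp (2*h) + 4) - exp h)^2 / 4 := by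
  unfold gFun
  linear_combination (-1/4 : ℝ) * sq_sqrt_exp_two_mul_add_four h

lemma one_sub_gFun_pos (h : ℝ) : 0 < 1 - gFun h := by
  have := sqrt_exp_two_mul_add_four_sub_exp_pos h
  rw [one_sub_gFun]
  positivity

lemma two_sub_gFun (h : ℝ) : 2 - gFun h = √(exp (2*h) + 4) * (√(exp (2*h) + 4) - exp h) / 2 := by
  unfold gFun
  linear_combination (-1/2 : ℝ) * sq_sqrt_exp_two_mul_add_four h

lemma gFunDeriv_mul_two_sub_gFun (h : ℝ) :
    gFunDeriv h * (2 - gFun h) = 2 * gFun h * (1 - gFun h) := by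
  have hs : √(exp (2*h) + 4) ≠ 0 := by positivity
  rw [two_sub_gFun, one_sub_gFun]
  unfold gFunDeriv gFun
  field_simp
  ring

lemma hasDerivAt_p0 (h : ℝ) : HasDerivAt p0 (gFun h) h := by
  have hne := (one_sub_gFun_pos h).ne'
  have hinner : HasDerivAt (fun x => 1 - gFun x) (-gFunDeriv h) h :=
    (hasDerivAt_gFun h).const_sub 1
  refine ((hinner.neg.div_const 2).sub ((hinner.log hne).const_mul (1/2 : ℝ))).congr_deriv ?_
  field_simp
  linear_combination gFunDeriv_mul_two_sub_gFun h

lemma ptilde_eq (h J : ℝ) : ptilde h J = fun m => -J * m^2 + p0 (2*J*m + h - J) := by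
  funext m
  rw [ptilde]
  ring_nf

lemma hasDerivAt_affine (h J m : ℝ) : HasDerivAt (fun m : ℝ => 2*J*m + h - J) (2*J) m := by
  simpa using (((hasDerivAt_id m).const_mul (2*J)).add_const h).sub_const J

lemma hasDerivAt_ptilde (h J m : ℝ) :
    HasDerivAt (ptilde h J) (-2*J*m + 2*J * gFun (2*J*m + h - J)) m := by
  rw [ptilde_eq]
  exact (((hasDerivAt_pow 2 m).const_mul (-J)).add
    ((hasDerivAt_p0 _).comp m (hasDerivAt_affine h J m))).congr_deriv (by push_cast; ring)

lemma iteratedDeriv_two_ptilde (h J m : ℝ) :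
    iteratedDeriv 2 (ptilde h J) m = -2*J + (2*J)^2 * deriv gFun (2*J*m + h - J) := by
  rw [iteratedDeriv_succ, iteratedDeriv_one, funext fun m => (hasDerivAt_ptilde h J m).deriv,
    deriv_gFun]
  exact (((hasDerivAt_id m).const_mul (-2*J)).add (((hasDerivAt_gFun _).comp m
    (hasDerivAt_affine h J m)).const_mul (2*J))).deriv.trans (by ring)

/-- `∂²p̃(m) + 2J = (2J)²·g'(2Jm + h − J) > 0`; hence at any point
with `λ = ∂²p̃(m) < 0`, one has `−λ⁻¹ − (2J)⁻¹ > 0`. -/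
theorem ptilde_second_derivative_identity (h J : ℝ) (hJ : 0 < J) :
    (∀ m : ℝ,
      iteratedDeriv 2 (ptilde h J) m + 2*J = (2*J)^2 * deriv gFun (2*J*m + h - J) ∧
      0 < iteratedDeriv 2 (ptilde h J) m + 2*J) ∧
    (∀ m : ℝ, iteratedDeriv 2 (ptilde h J) m < 0 →
      0 < -(iteratedDeriv 2 (ptilde h J) m)⁻¹ - (2*J)⁻¹) := by
  have hsum (m : ℝ) :
      iteratedDeriv 2 (ptilde h J) m + 2*J = (2*J)^2 * deriv gFun (2*J*m + h - J) := by
    rw [iteratedDeriv_two_ptilde]; ring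
  have hpos (m : ℝ) : 0 < iteratedDeriv 2 (ptilde h J) m + 2*J := by
    rw [hsum, deriv_gFun]
    have := gFunDeriv_pos (2*J*m + h - J)
    positivity
  exact ⟨fun m => ⟨hsum m, hpos m⟩, fun m hm => neg_inv_sub_inv_pos hm (hpos m)⟩

end
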